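/- arXiv:2503.22284 — 2 statements merged into one kernel-verified Lean document; each statement's English description precedes it below -/
import Mathlib

section
/- Under the RCT setup, for any real numbers r₀' ≤ 0 and r₁' ≥ 0, the asymptotic variance of the plug-in marginal-effect estimator satisfies Var[r₀'·φ_{m,0} + r₁'·φ_{m,1}] = r₀'²·((π₁/π₀)·κ₀² + σ₀²) + r₁'²·((π₀/π₁)·κ₁² + σ₁²) − 2·|r₀'·r₁'|·(Cov[Y₀, Y₁] − Cov[Y₀ − m₀, Y₁ − m₁]), where κ_a² := E[(Y_a − m_a)²] and σ_a² := Var[Y_a]. -/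
open MeasureTheory ProbabilityTheory

/-- Covariance of two real random variables. -/
noncomputable def cov {Ω : Type*} [MeasurableSpace Ω] (P : MeasureTheory.Measure Ω)
    (X Z : Ω → ℝ) : ℝ :=
  ∫ ω, (X ω - ∫ x, X x ∂P) * (Z ω - ∫ x, Z x ∂P) ∂P

section Aux

variable {Ω : Type*} [mΩ : MeasurableSpace Ω] {P : MeasureTheory.Measure Ω}

lemma aux_integrable_mul {f g : Ω → ℝ} (hf : MemLp f 2 P) (hg : MemLp g 2 P) :
    Integrable (fun ω => f ω * g ω) P := by
  refine Integrable.mono' (hf.integrable_sq.add hg.integrable_sq)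
    (hf.aestronglyMeasurable.mul hg.aestronglyMeasurable) (ae_of_all _ fun ω => ?_)
  simp only [Pi.add_apply, Real.norm_eq_abs, abs_mul]
  nlinarith [abs_nonneg (f ω), abs_nonneg (g ω), sq_abs (f ω), sq_abs (g ω),
    sq_nonneg (|f ω| - |g ω|)]

lemma aux_indep_mono {m₁ m₂ m₁' m₂' : MeasurableSpace Ω} (h : Indep m₁ m₂ P)
    (h1 : m₁' ≤ m₁) (h2 : m₂' ≤ m₂) : Indep m₁' m₂' P := by
  rw [Indep_iff] at h ⊢
  exact fun t1 t2 ht1 ht2 => h t1 t2 (h1 _ ht1) (h2 _ ht2)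

lemma aux_integral_indicator {s : Set Ω} (hs : MeasurableSet s) :
    ∫ ω, s.indicator (fun _ => (1:ℝ)) ω ∂P = (P s).toReal := by
  rw [integral_indicator_const (1:ℝ) hs, smul_eq_mul, mul_one]
  rfl

end Aux

theorem marginal_effect_asymptotic_variance
    {Ω : Type*} (𝒢 : MeasurableSpace Ω) [mΩ : MeasurableSpace Ω] (P : Measure Ω) [IsProbabilityMeasure P]
    (hG : 𝒢 ≤ mΩ)
    (Y : Fin 2 → Ω → ℝ) (hYL2 : ∀ a, MemLp (Y a) 2 P)
    (A : Ω → Fin 2) (hA : Measurable A)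
    (hindep : Indep (MeasurableSpace.comap A inferInstance)
      (𝒢 ⊔ MeasurableSpace.comap (fun ω => (Y 0 ω, Y 1 ω)) inferInstance) P)
    (π : Fin 2 → ℝ) (hπ : ∀ a, π a = (P {ω | A ω = a}).toReal)
    (hπpos : ∀ a, 0 < π a) (hπlt : ∀ a, π a < 1) (hπsum : π 0 + π 1 = 1)
    (m : Fin 2 → Ω → ℝ) (hmG : ∀ a, Measurable[𝒢] (m a)) (hmL2 : ∀ a, MemLp (m a) 2 P)
    (hcons : ∀ a, ∫ ω, m a ω ∂P = ∫ ω, Y a ω ∂P)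
    (r₀' r₁' : ℝ) (hr₀ : r₀' ≤ 0) (hr₁ : 0 ≤ r₁') :
    variance (fun ω =>
        r₀' * (((if A ω = 0 then (1:ℝ) else 0) / π 0) * (Y (A ω) ω - m 0 ω)
            + (m 0 ω - ∫ x, Y 0 x ∂P))
        + r₁' * (((if A ω = 1 then (1:ℝ) else 0) / π 1) * (Y (A ω) ω - m 1 ω)
            + (m 1 ω - ∫ x, Y 1 x ∂P))) P
      = r₀' ^ 2 * ((π 1 / π 0) * (∫ ω, (Y 0 ω - m 0 ω) ^ 2 ∂P) + variance (Y 0) P)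
        + r₁' ^ 2 * ((π 0 / π 1) * (∫ ω, (Y 1 ω - m 1 ω) ^ 2 ∂P) + variance (Y 1) P)
        - 2 * |r₀' * r₁'| *
            (@cov Ω mΩ P (Y 0) (Y 1)
              - @cov Ω mΩ P (fun ω => Y 0 ω - m 0 ω) (fun ω => Y 1 ω - m 1 ω)) := by
  classical
  set μ0 := ∫ x, Y 0 x ∂P with hμ0
  set μ1 := ∫ x, Y 1 x ∂P with hμ1
  set F : Ω → ℝ := fun ω => Y 0 ω - m 0 ω with hFdef
  set G : Ω → ℝ := fun ω => Y 1 ω - m 1 ω with hGdef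
  set U : Ω → ℝ := fun ω => m 0 ω - μ0 with hUdef
  set V : Ω → ℝ := fun ω => m 1 ω - μ1 with hVdef
  set J0 : Ω → ℝ := fun ω => if A ω = 0 then (1:ℝ) else 0 with hJ0def
  set J1 : Ω → ℝ := fun ω => if A ω = 1 then (1:ℝ) else 0 with hJ1def
  set m₂ := 𝒢 ⊔ MeasurableSpace.comap (fun ω => (Y 0 ω, Y 1 ω)) inferInstance with hm₂
  -- measurability with respect to m₂
  have hpair : Measurable[m₂] (fun ω => (Y 0 ω, Y 1 ω)) :=
    (comap_measurable _).mono le_sup_right le_rfl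
  have hY0m : Measurable[m₂] (Y 0) := measurable_fst.comp hpair
  have hY1m : Measurable[m₂] (Y 1) := measurable_snd.comp hpair
  have hm0m : Measurable[m₂] (m 0) := (hmG 0).mono le_sup_left le_rfl
  have hm1m : Measurable[m₂] (m 1) := (hmG 1).mono le_sup_left le_rfl
  have hFm : Measurable[m₂] F := by rw [hFdef]; exact hY0m.sub hm0m
  have hGm : Measurable[m₂] G := by rw [hGdef]; exact hY1m.sub hm1m
  have hUm : Measurable[m₂] U := by rw [hUdef]; exact hm0m.sub measurable_const
  have hVm : Measurable[m₂] V := by rw [hVdef]; exact hm1m.sub measurable_const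
  -- indicator facts
  have hA' : Measurable[mΩ] A := hA
  have hAset : ∀ a : Fin 2, MeasurableSet[mΩ] {ω | A ω = a} := fun a =>
    hA' (measurableSet_singleton a)
  have hJ0meas : Measurable[mΩ] J0 := by
    rw [hJ0def]; exact Measurable.ite (hAset 0) measurable_const measurable_const
  have hJ1meas : Measurable[mΩ] J1 := by
    rw [hJ1def]; exact Measurable.ite (hAset 1) measurable_const measurable_const
  have hJ0bd : ∀ ω, ‖J0 ω‖ ≤ 1 := by
    intro ω; rw [hJ0def]; by_cases h : A ω = 0 <;> simp [h]
  have hJ1bd : ∀ ω, ‖J1 ω‖ ≤ 1 := by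
    intro ω; rw [hJ1def]; by_cases h : A ω = 1 <;> simp [h]
  have hJint : ∀ (J : Ω → ℝ), Measurable[mΩ] J → (∀ ω, ‖J ω‖ ≤ 1) → Integrable J P := by
    intro J hm hb
    exact Integrable.mono' (integrable_const 1) hm.aestronglyMeasurable (ae_of_all _ hb)
  have hJ0int : Integrable J0 P := hJint _ hJ0meas hJ0bd
  have hJ1int : Integrable J1 P := hJint _ hJ1meas hJ1bd
  have hJ0val : ∫ ω, J0 ω ∂P = π 0 := by
    rw [hπ 0]
    have h1 : ∫ ω, J0 ω ∂P = ∫ ω, Set.indicator {ω | A ω = 0} (fun _ => (1:ℝ)) ω ∂P := by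
      refine integral_congr_ae (ae_of_all _ fun ω => ?_)
      rw [hJ0def]
      by_cases h : A ω = 0 <;> simp [Set.indicator_apply, Set.mem_setOf_eq, h]
    rw [h1, @aux_integral_indicator Ω mΩ P _ (hAset 0)]
  have hJ1val : ∫ ω, J1 ω ∂P = π 1 := by
    rw [hπ 1]
    have h1 : ∫ ω, J1 ω ∂P = ∫ ω, Set.indicator {ω | A ω = 1} (fun _ => (1:ℝ)) ω ∂P := by
      refine integral_congr_ae (ae_of_all _ fun ω => ?_)
      rw [hJ1def]
      by_cases h : A ω = 1 <;> simp [Set.indicator_apply, Set.mem_setOf_eq, h]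
    rw [h1, @aux_integral_indicator Ω mΩ P _ (hAset 1)]
  -- the key independence computation
  have key : ∀ (a : Fin 2) (J h : Ω → ℝ),
      J = (fun ω => if A ω = a then (1:ℝ) else 0) → (∫ ω, J ω ∂P = π a) →
      Measurable[mΩ] J → Integrable J P →
      Measurable[m₂] h → Integrable h P →
      ∫ ω, J ω * h ω ∂P = π a * ∫ ω, h ω ∂P := by
    intro a J h hJdef hJval hJm hJi hm hint
    have hJcm : Measurable[MeasurableSpace.comap A inferInstance] J := by
      rw [hJdef]
      refine Measurable.ite ?_ measurable_const measurable_const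
      exact ⟨{a}, measurableSet_singleton a, rfl⟩
    have hIF : IndepFun J h P := by
      rw [IndepFun_iff_Indep]
      exact @aux_indep_mono Ω mΩ P _ _ _ _ hindep hJcm.comap_le hm.comap_le
    have h2 := hIF.integral_mul_eq_mul_integral hJi.aestronglyMeasurable hint.aestronglyMeasurable
    simpa [Pi.mul_apply, hJval] using h2
  -- L² facts
  have hFL2 : MemLp F 2 P := by rw [hFdef]; exact (hYL2 0).sub (hmL2 0)
  have hGL2 : MemLp G 2 P := by rw [hGdef]; exact (hYL2 1).sub (hmL2 1)
  have hUL2 : MemLp U 2 P := by rw [hUdef]; exact (hmL2 0).sub (memLp_const μ0)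
  have hVL2 : MemLp V 2 P := by rw [hVdef]; exact (hmL2 1).sub (memLp_const μ1)
  have hFint : Integrable F P := hFL2.integrable one_le_two
  have hGint : Integrable G P := hGL2.integrable one_le_two
  have hUint : Integrable U P := hUL2.integrable one_le_two
  have hVint : Integrable V P := hVL2.integrable one_le_two
  -- means are zero
  have hc0 : ∫ ω, m 0 ω ∂P = μ0 := by rw [hμ0]; exact hcons 0
  have hc1 : ∫ ω, m 1 ω ∂P = μ1 := by rw [hμ1]; exact hcons 1
  have hYint : ∀ a, Integrable (Y a) P := fun a => (hYL2 a).integrable one_le_two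
  have hmint : ∀ a, Integrable (m a) P := fun a => (hmL2 a).integrable one_le_two
  have hF0 : ∫ ω, F ω ∂P = 0 := by
    rw [hFdef]
    rw [integral_sub (hYint 0) (hmint 0), hc0, ← hμ0, sub_self]
  have hG0 : ∫ ω, G ω ∂P = 0 := by
    rw [hGdef]
    rw [integral_sub (hYint 1) (hmint 1), hc1, ← hμ1, sub_self]
  have hU0 : ∫ ω, U ω ∂P = 0 := by
    rw [hUdef]
    rw [integral_sub (hmint 0) (integrable_const μ0), integral_const, probReal_univ,
      one_smul, hc0, sub_self]
  have hV0 : ∫ ω, V ω ∂P = 0 := by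
    rw [hVdef]
    rw [integral_sub (hmint 1) (integrable_const μ1), integral_const, probReal_univ,
      one_smul, hc1, sub_self]
  -- integrable products
  have iFF : Integrable (fun ω => F ω ^ 2) P := hFL2.integrable_sq
  have iGG : Integrable (fun ω => G ω ^ 2) P := hGL2.integrable_sq
  have iUU : Integrable (fun ω => U ω ^ 2) P := hUL2.integrable_sq
  have iVV : Integrable (fun ω => V ω ^ 2) P := hVL2.integrable_sq
  have iFU : Integrable (fun ω => F ω * U ω) P := @aux_integrable_mul Ω mΩ P _ _ hFL2 hUL2
  have iFV : Integrable (fun ω => F ω * V ω) P := @aux_integrable_mul Ω mΩ P _ _ hFL2 hVL2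
  have iGU : Integrable (fun ω => G ω * U ω) P := @aux_integrable_mul Ω mΩ P _ _ hGL2 hUL2
  have iGV : Integrable (fun ω => G ω * V ω) P := @aux_integrable_mul Ω mΩ P _ _ hGL2 hVL2
  have iUV : Integrable (fun ω => U ω * V ω) P := @aux_integrable_mul Ω mΩ P _ _ hUL2 hVL2
  have iFG : Integrable (fun ω => F ω * G ω) P := @aux_integrable_mul Ω mΩ P _ _ hFL2 hGL2
  -- indicator-weighted integrable products
  have iJ0F : Integrable (fun ω => J0 ω * F ω) P :=
    hFint.bdd_mul hJ0meas.aestronglyMeasurable (ae_of_all _ hJ0bd)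
  have iJ1G : Integrable (fun ω => J1 ω * G ω) P :=
    hGint.bdd_mul hJ1meas.aestronglyMeasurable (ae_of_all _ hJ1bd)
  have iJ0FF : Integrable (fun ω => J0 ω * F ω ^ 2) P :=
    iFF.bdd_mul hJ0meas.aestronglyMeasurable (ae_of_all _ hJ0bd)
  have iJ1GG : Integrable (fun ω => J1 ω * G ω ^ 2) P :=
    iGG.bdd_mul hJ1meas.aestronglyMeasurable (ae_of_all _ hJ1bd)
  have iJ0FU : Integrable (fun ω => J0 ω * (F ω * U ω)) P :=
    iFU.bdd_mul hJ0meas.aestronglyMeasurable (ae_of_all _ hJ0bd)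
  have iJ0FV : Integrable (fun ω => J0 ω * (F ω * V ω)) P :=
    iFV.bdd_mul hJ0meas.aestronglyMeasurable (ae_of_all _ hJ0bd)
  have iJ1GU : Integrable (fun ω => J1 ω * (G ω * U ω)) P :=
    iGU.bdd_mul hJ1meas.aestronglyMeasurable (ae_of_all _ hJ1bd)
  have iJ1GV : Integrable (fun ω => J1 ω * (G ω * V ω)) P :=
    iGV.bdd_mul hJ1meas.aestronglyMeasurable (ae_of_all _ hJ1bd)
  -- the nice form of the estimator
  set X : Ω → ℝ := fun ω =>
      r₀' / π 0 * (J0 ω * F ω) + (r₀' * U ω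
        + (r₁' / π 1 * (J1 ω * G ω) + r₁' * V ω)) with hXdef
  have harg : (fun ω =>
        r₀' * (((if A ω = 0 then (1:ℝ) else 0) / π 0) * (Y (A ω) ω - m 0 ω)
            + (m 0 ω - μ0))
        + r₁' * (((if A ω = 1 then (1:ℝ) else 0) / π 1) * (Y (A ω) ω - m 1 ω)
            + (m 1 ω - μ1))) = X := by
    funext ω
    rcases (show ∀ b : Fin 2, b = 0 ∨ b = 1 by decide) (A ω) with h | h <;>
      simp only [hXdef, hJ0def, hJ1def, hFdef, hGdef, hUdef, hVdef, h] <;>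
      norm_num <;> ring
  -- MemLp of X
  have MJ0F : MemLp (fun ω => J0 ω * F ω) 2 P := by
    refine MemLp.of_le hFL2 (hJ0meas.aestronglyMeasurable.mul hFL2.aestronglyMeasurable)
      (ae_of_all _ fun ω => ?_)
    rw [norm_mul]
    calc ‖J0 ω‖ * ‖F ω‖ ≤ 1 * ‖F ω‖ := by
          exact mul_le_mul_of_nonneg_right (hJ0bd ω) (norm_nonneg _)
      _ = ‖F ω‖ := one_mul _
  have MJ1G : MemLp (fun ω => J1 ω * G ω) 2 P := by
    refine MemLp.of_le hGL2 (hJ1meas.aestronglyMeasurable.mul hGL2.aestronglyMeasurable)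
      (ae_of_all _ fun ω => ?_)
    rw [norm_mul]
    calc ‖J1 ω‖ * ‖G ω‖ ≤ 1 * ‖G ω‖ := by
          exact mul_le_mul_of_nonneg_right (hJ1bd ω) (norm_nonneg _)
      _ = ‖G ω‖ := one_mul _
  have hXL2 : MemLp X 2 P := by
    rw [hXdef]
    exact (MJ0F.const_mul _).add ((hUL2.const_mul _).add
      ((MJ1G.const_mul _).add (hVL2.const_mul _)))
  -- mean of X is zero
  have hJF0 : ∫ ω, J0 ω * F ω ∂P = 0 := by
    rw [key 0 J0 F hJ0def hJ0val hJ0meas hJ0int hFm hFint, hF0, mul_zero]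
  have hJG0 : ∫ ω, J1 ω * G ω ∂P = 0 := by
    rw [key 1 J1 G hJ1def hJ1val hJ1meas hJ1int hGm hGint, hG0, mul_zero]
  have i2 : Integrable (fun ω => r₀' * U ω + (r₁' / π 1 * (J1 ω * G ω) + r₁' * V ω)) P :=
    (hUint.const_mul _).add ((iJ1G.const_mul _).add (hVint.const_mul _))
  have i3 : Integrable (fun ω => r₁' / π 1 * (J1 ω * G ω) + r₁' * V ω) P :=
    (iJ1G.const_mul _).add (hVint.const_mul _)
  have hEX : ∫ ω, X ω ∂P = 0 := by
    rw [hXdef]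
    rw [integral_add (iJ0F.const_mul _) i2, integral_add (hUint.const_mul _) i3,
      integral_add (iJ1G.const_mul _) (hVint.const_mul _),
      integral_const_mul, integral_const_mul, integral_const_mul, integral_const_mul,
      hJF0, hJG0, hU0, hV0]
    ring
  -- variance of X as second moment
  have hvarX : variance X P = ∫ ω, X ω ^ 2 ∂P := by
    have h := variance_eq_integral hXL2.aestronglyMeasurable.aemeasurable
    simpa [hEX] using h
  -- pointwise expansion of X²
  have hpt : ∀ ω, X ω ^ 2 =
      (r₀' / π 0) ^ 2 * (J0 ω * F ω ^ 2)
      + ((r₁' / π 1) ^ 2 * (J1 ω * G ω ^ 2)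
      + (r₀' ^ 2 * U ω ^ 2
      + (r₁' ^ 2 * V ω ^ 2
      + (2 * (r₀' / π 0) * r₀' * (J0 ω * (F ω * U ω))
      + (2 * (r₀' / π 0) * r₁' * (J0 ω * (F ω * V ω))
      + (2 * (r₁' / π 1) * r₀' * (J1 ω * (G ω * U ω))
      + (2 * (r₁' / π 1) * r₁' * (J1 ω * (G ω * V ω))
      + 2 * r₀' * r₁' * (U ω * V ω)))))))) := by
    intro ω
    rcases (show ∀ b : Fin 2, b = 0 ∨ b = 1 by decide) (A ω) with h | h <;>
      simp only [hXdef, hJ0def, hJ1def, h] <;>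
      norm_num <;> ring
  -- integrability of the tails
  have t9 : Integrable (fun ω => 2 * r₀' * r₁' * (U ω * V ω)) P := iUV.const_mul _
  have t89 : Integrable (fun ω => 2 * (r₁' / π 1) * r₁' * (J1 ω * (G ω * V ω))
      + 2 * r₀' * r₁' * (U ω * V ω)) P := (iJ1GV.const_mul _).add t9
  have t789 : Integrable (fun ω => 2 * (r₁' / π 1) * r₀' * (J1 ω * (G ω * U ω))
      + (2 * (r₁' / π 1) * r₁' * (J1 ω * (G ω * V ω))
      + 2 * r₀' * r₁' * (U ω * V ω))) P := (iJ1GU.const_mul _).add t89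
  have t6789 : Integrable (fun ω => 2 * (r₀' / π 0) * r₁' * (J0 ω * (F ω * V ω))
      + (2 * (r₁' / π 1) * r₀' * (J1 ω * (G ω * U ω))
      + (2 * (r₁' / π 1) * r₁' * (J1 ω * (G ω * V ω))
      + 2 * r₀' * r₁' * (U ω * V ω)))) P := (iJ0FV.const_mul _).add t789
  have t56789 : Integrable (fun ω => 2 * (r₀' / π 0) * r₀' * (J0 ω * (F ω * U ω))
      + (2 * (r₀' / π 0) * r₁' * (J0 ω * (F ω * V ω))
      + (2 * (r₁' / π 1) * r₀' * (J1 ω * (G ω * U ω))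
      + (2 * (r₁' / π 1) * r₁' * (J1 ω * (G ω * V ω))
      + 2 * r₀' * r₁' * (U ω * V ω))))) P := (iJ0FU.const_mul _).add t6789
  have t4to9 : Integrable (fun ω => r₁' ^ 2 * V ω ^ 2
      + (2 * (r₀' / π 0) * r₀' * (J0 ω * (F ω * U ω))
      + (2 * (r₀' / π 0) * r₁' * (J0 ω * (F ω * V ω))
      + (2 * (r₁' / π 1) * r₀' * (J1 ω * (G ω * U ω))
      + (2 * (r₁' / π 1) * r₁' * (J1 ω * (G ω * V ω))
      + 2 * r₀' * r₁' * (U ω * V ω)))))) P := (iVV.const_mul _).add t56789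
  have t3to9 : Integrable (fun ω => r₀' ^ 2 * U ω ^ 2
      + (r₁' ^ 2 * V ω ^ 2
      + (2 * (r₀' / π 0) * r₀' * (J0 ω * (F ω * U ω))
      + (2 * (r₀' / π 0) * r₁' * (J0 ω * (F ω * V ω))
      + (2 * (r₁' / π 1) * r₀' * (J1 ω * (G ω * U ω))
      + (2 * (r₁' / π 1) * r₁' * (J1 ω * (G ω * V ω))
      + 2 * r₀' * r₁' * (U ω * V ω))))))) P := (iUU.const_mul _).add t4to9
  have t2to9 : Integrable (fun ω => (r₁' / π 1) ^ 2 * (J1 ω * G ω ^ 2)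
      + (r₀' ^ 2 * U ω ^ 2
      + (r₁' ^ 2 * V ω ^ 2
      + (2 * (r₀' / π 0) * r₀' * (J0 ω * (F ω * U ω))
      + (2 * (r₀' / π 0) * r₁' * (J0 ω * (F ω * V ω))
      + (2 * (r₁' / π 1) * r₀' * (J1 ω * (G ω * U ω))
      + (2 * (r₁' / π 1) * r₁' * (J1 ω * (G ω * V ω))
      + 2 * r₀' * r₁' * (U ω * V ω)))))))) P := (iJ1GG.const_mul _).add t3to9
  -- values of the indicator-weighted integrals
  have eJ0FF : ∫ ω, J0 ω * F ω ^ 2 ∂P = π 0 * ∫ ω, F ω ^ 2 ∂P :=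
    key 0 J0 _ hJ0def hJ0val hJ0meas hJ0int (hFm.pow_const 2) iFF
  have eJ1GG : ∫ ω, J1 ω * G ω ^ 2 ∂P = π 1 * ∫ ω, G ω ^ 2 ∂P :=
    key 1 J1 _ hJ1def hJ1val hJ1meas hJ1int (hGm.pow_const 2) iGG
  have eJ0FU : ∫ ω, J0 ω * (F ω * U ω) ∂P = π 0 * ∫ ω, F ω * U ω ∂P :=
    key 0 J0 _ hJ0def hJ0val hJ0meas hJ0int (hFm.mul hUm) iFU
  have eJ0FV : ∫ ω, J0 ω * (F ω * V ω) ∂P = π 0 * ∫ ω, F ω * V ω ∂P :=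
    key 0 J0 _ hJ0def hJ0val hJ0meas hJ0int (hFm.mul hVm) iFV
  have eJ1GU : ∫ ω, J1 ω * (G ω * U ω) ∂P = π 1 * ∫ ω, G ω * U ω ∂P :=
    key 1 J1 _ hJ1def hJ1val hJ1meas hJ1int (hGm.mul hUm) iGU
  have eJ1GV : ∫ ω, J1 ω * (G ω * V ω) ∂P = π 1 * ∫ ω, G ω * V ω ∂P :=
    key 1 J1 _ hJ1def hJ1val hJ1meas hJ1int (hGm.mul hVm) iGV
  -- second moment of X
  have hEX2 : ∫ ω, X ω ^ 2 ∂P =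
      (r₀' / π 0) ^ 2 * (π 0 * ∫ ω, F ω ^ 2 ∂P)
      + ((r₁' / π 1) ^ 2 * (π 1 * ∫ ω, G ω ^ 2 ∂P)
      + (r₀' ^ 2 * ∫ ω, U ω ^ 2 ∂P
      + (r₁' ^ 2 * ∫ ω, V ω ^ 2 ∂P
      + (2 * (r₀' / π 0) * r₀' * (π 0 * ∫ ω, F ω * U ω ∂P)
      + (2 * (r₀' / π 0) * r₁' * (π 0 * ∫ ω, F ω * V ω ∂P)
      + (2 * (r₁' / π 1) * r₀' * (π 1 * ∫ ω, G ω * U ω ∂P)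
      + (2 * (r₁' / π 1) * r₁' * (π 1 * ∫ ω, G ω * V ω ∂P)
      + 2 * r₀' * r₁' * ∫ ω, U ω * V ω ∂P))))))) := by
    rw [integral_congr_ae (ae_of_all _ hpt)]
    rw [integral_add (iJ0FF.const_mul _) t2to9,
      integral_add (iJ1GG.const_mul _) t3to9,
      integral_add (iUU.const_mul _) t4to9,
      integral_add (iVV.const_mul _) t56789,
      integral_add (iJ0FU.const_mul _) t6789,
      integral_add (iJ0FV.const_mul _) t789,
      integral_add (iJ1GU.const_mul _) t89,
      integral_add (iJ1GV.const_mul _) t9,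
      integral_const_mul, integral_const_mul, integral_const_mul, integral_const_mul,
      integral_const_mul, integral_const_mul, integral_const_mul, integral_const_mul,
      integral_const_mul, eJ0FF, eJ1GG, eJ0FU, eJ0FV, eJ1GU, eJ1GV]
  -- variances of Y₀, Y₁
  have hvar0 : variance (Y 0) P =
      ∫ ω, F ω ^ 2 ∂P + (2 * ∫ ω, F ω * U ω ∂P + ∫ ω, U ω ^ 2 ∂P) := by
    have h : variance (Y 0) P = ∫ ω, ((Y 0 - fun _ => ∫ x, Y 0 x ∂P : Ω → ℝ) ^ 2) ω ∂P :=
      variance_eq_integral (hYL2 0).aestronglyMeasurable.aemeasurable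
    rw [h]
    have hc : (fun ω => ((Y 0 - fun _ => ∫ x, Y 0 x ∂P : Ω → ℝ) ^ 2) ω)
        = fun ω => F ω ^ 2 + (2 * (F ω * U ω) + U ω ^ 2) := by
      funext ω
      simp only [Pi.pow_apply, Pi.sub_apply, hFdef, hUdef, ← hμ0]
      ring
    rw [show ∫ ω, ((Y 0 - fun _ => ∫ x, Y 0 x ∂P : Ω → ℝ) ^ 2) ω ∂P
        = ∫ ω, (F ω ^ 2 + (2 * (F ω * U ω) + U ω ^ 2)) ∂P from by rw [hc]]
    have it1 : Integrable (fun ω => 2 * (F ω * U ω) + U ω ^ 2) P := (iFU.const_mul 2).add iUU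
    rw [integral_add iFF it1, integral_add (iFU.const_mul 2) iUU, integral_const_mul]
  have hvar1 : variance (Y 1) P =
      ∫ ω, G ω ^ 2 ∂P + (2 * ∫ ω, G ω * V ω ∂P + ∫ ω, V ω ^ 2 ∂P) := by
    have h : variance (Y 1) P = ∫ ω, ((Y 1 - fun _ => ∫ x, Y 1 x ∂P : Ω → ℝ) ^ 2) ω ∂P :=
      variance_eq_integral (hYL2 1).aestronglyMeasurable.aemeasurable
    rw [h]
    have hc : (fun ω => ((Y 1 - fun _ => ∫ x, Y 1 x ∂P : Ω → ℝ) ^ 2) ω)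
        = fun ω => G ω ^ 2 + (2 * (G ω * V ω) + V ω ^ 2) := by
      funext ω
      simp only [Pi.pow_apply, Pi.sub_apply, hGdef, hVdef, ← hμ1]
      ring
    rw [show ∫ ω, ((Y 1 - fun _ => ∫ x, Y 1 x ∂P : Ω → ℝ) ^ 2) ω ∂P
        = ∫ ω, (G ω ^ 2 + (2 * (G ω * V ω) + V ω ^ 2)) ∂P from by rw [hc]]
    have it1 : Integrable (fun ω => 2 * (G ω * V ω) + V ω ^ 2) P := (iGV.const_mul 2).add iVV
    rw [integral_add iGG it1, integral_add (iGV.const_mul 2) iVV, integral_const_mul]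
  -- covariances
  have hcovY : @cov Ω mΩ P (Y 0) (Y 1) =
      ∫ ω, F ω * G ω ∂P + (∫ ω, F ω * V ω ∂P + (∫ ω, G ω * U ω ∂P
        + ∫ ω, U ω * V ω ∂P)) := by
    have h0 : @cov Ω mΩ P (Y 0) (Y 1)
        = ∫ ω, (Y 0 ω - μ0) * (Y 1 ω - μ1) ∂P := rfl
    rw [h0]
    rw [show (fun ω => (Y 0 ω - μ0) * (Y 1 ω - μ1))
        = fun ω => F ω * G ω + (F ω * V ω + (G ω * U ω + U ω * V ω)) from funext fun ω => by
      simp only [hFdef, hGdef, hUdef, hVdef]; ring]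
    have it1 : Integrable (fun ω => G ω * U ω + U ω * V ω) P := iGU.add iUV
    have it2 : Integrable (fun ω => F ω * V ω + (G ω * U ω + U ω * V ω)) P := iFV.add it1
    rw [integral_add iFG it2, integral_add iFV it1, integral_add iGU iUV]
  have hcovFG : @cov Ω mΩ P F G = ∫ ω, F ω * G ω ∂P := by
    have h0 : @cov Ω mΩ P F G
        = ∫ ω, (F ω - ∫ x, F x ∂P) * (G ω - ∫ x, G x ∂P) ∂P := rfl
    rw [h0, hF0, hG0]
    simp only [sub_zero]
  -- the goal
  rw [harg, hvarX, hEX2, hvar0, hvar1, hcovY, hcovFG]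
  rw [show (∫ ω, (Y 0 ω - m 0 ω) ^ 2 ∂P) = ∫ ω, F ω ^ 2 ∂P from by rw [hFdef]]
  rw [show (∫ ω, (Y 1 ω - m 1 ω) ^ 2 ∂P) = ∫ ω, G ω ^ 2 ∂P from by rw [hGdef]]
  rw [abs_of_nonpos (mul_nonpos_iff.mpr (Or.inr ⟨hr₀, hr₁⟩))]
  have hπ0 : π 0 ≠ 0 := (hπpos 0).ne'
  have hπ1 : π 1 ≠ 0 := (hπpos 1).ne'
  have h01 : π 1 = 1 - π 0 := by linarith
  rw [h01] at hπ1 ⊢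
  field_simp
  ring
end

section
/- Under the RCT setup, let W : Ω → ℝ be a 𝒢-measurable square-integrable covariate with E[W] = 0 and Var[W] > 0, assume σ_a := (Var[Y_a])^{1/2} > 0 for a ∈ {0,1}, and set the population linear-regression fits m_a := Ψ_a + (Cov[W, Y_a]/Var[W])·W and correlations ρ_a := Cov[W, Y_a]/(σ_a·(Var[W])^{1/2}). Then the asymptotic variance of the covariate-adjusted ATE estimator satisfies Var[φ_{m,1} − φ_{m,0}] = σ₀²/π₀ + σ₁²/π₁ − π₀·π₁·(ρ₀σ₀/π₀ + ρ₁σ₁/π₁)². -/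
open MeasureTheory ProbabilityTheory

lemma integrable_mul_of_L2 {Ω : Type*} [MeasurableSpace Ω] {P : Measure Ω} {f g : Ω → ℝ}
    (hf : MemLp f 2 P) (hg : MemLp g 2 P) : Integrable (fun ω => f ω * g ω) P := by
  refine Integrable.mono' ((hf.integrable_sq.add hg.integrable_sq).const_mul (1/2 : ℝ))
    (hf.1.mul hg.1) (ae_of_all _ fun ω => ?_)
  rw [Real.norm_eq_abs, abs_mul]
  simp only [Pi.add_apply]
  nlinarith [sq_nonneg (|f ω| - |g ω|), sq_abs (f ω), sq_abs (g ω),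
    abs_nonneg (f ω), abs_nonneg (g ω)]

lemma indic_integral {Ω : Type*} {m' : MeasurableSpace Ω} [mΩ : MeasurableSpace Ω] {P : Measure Ω}
    [IsProbabilityMeasure P] {A : Ω → Fin 2} (hA : Measurable A)
    (hindep : Indep (MeasurableSpace.comap A inferInstance) m' P)
    (a : Fin 2) {f : Ω → ℝ} (hf : Measurable[m'] f) (hfi : Integrable f P) :
    ∫ ω, (if A ω = a then (1:ℝ) else 0) * f ω ∂P
      = (P {ω | A ω = a}).toReal * ∫ ω, f ω ∂P := by
  set X : Ω → ℝ := fun ω => if A ω = a then (1:ℝ) else 0 with hX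
  have hXm : Measurable[MeasurableSpace.comap A inferInstance] X := by
    exact (measurable_of_countable (fun b : Fin 2 => if b = a then (1:ℝ) else 0)).comp
      (Measurable.of_comap_le le_rfl)
  have hindepf : IndepFun X f P := by
    rw [IndepFun_iff_Indep]
    exact indep_of_indep_of_le_right
      (indep_of_indep_of_le_left hindep (measurable_iff_comap_le.mp hXm))
      (measurable_iff_comap_le.mp hf)
  have hsm : MeasurableSet[mΩ] {ω | A ω = a} := hA (measurableSet_singleton a)
  have hXeq : X = Set.indicator {ω | A ω = a} (fun _ => (1:ℝ)) := by
    funext ω; by_cases h : A ω = a <;> simp [hX, h, Set.indicator_apply, Set.mem_setOf_eq]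
  have hXi : Integrable X P := by
    rw [hXeq]; exact (integrable_const (1:ℝ)).indicator hsm
  have := hindepf.integral_fun_mul_eq_mul_integral hXi.1 hfi.1
  have hXint : ∫ ω, X ω ∂P = (P {ω | A ω = a}).toReal := by
    rw [hXeq, integral_indicator_const (1:ℝ) hsm]; simp; rfl
  calc ∫ ω, X ω * f ω ∂P = (∫ ω, X ω ∂P) * ∫ ω, f ω ∂P := this
    _ = (P {ω | A ω = a}).toReal * ∫ ω, f ω ∂P := by rw [hXint]

lemma main_calc {Ω : Type*} {mS : MeasurableSpace Ω} [mΩ : MeasurableSpace Ω] (P : Measure Ω)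
    [IsProbabilityMeasure P] {A : Ω → Fin 2} (hA : Measurable A)
    (hindep : Indep (MeasurableSpace.comap A inferInstance) mS P)
    {U0 U1 W : Ω → ℝ}
    (hU0 : MemLp U0 2 P) (hU1 : MemLp U1 2 P) (hW : MemLp W 2 P)
    (hU0m : Measurable[mS] U0) (hU1m : Measurable[mS] U1) (hWm : Measurable[mS] W)
    (π0 π1 c : ℝ) (hπ0 : π0 = (P {ω | A ω = (0 : Fin 2)}).toReal)
    (hπ1 : π1 = (P {ω | A ω = (1 : Fin 2)}).toReal)
    (h0 : π0 ≠ 0) (h1 : π1 ≠ 0)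
    (hiU0 : ∫ ω, U0 ω ∂P = 0) (hiU1 : ∫ ω, U1 ω ∂P = 0)
    (hiU0W : ∫ ω, U0 ω * W ω ∂P = 0) (hiU1W : ∫ ω, U1 ω * W ω ∂P = 0)
    (hiW : ∫ ω, W ω ∂P = 0) :
    variance (fun ω => (if A ω = 1 then (1:ℝ) else 0) / π1 * U1 ω
        - (if A ω = 0 then (1:ℝ) else 0) / π0 * U0 ω + c * W ω) P
      = (∫ ω, U1 ω * U1 ω ∂P) / π1 + (∫ ω, U0 ω * U0 ω ∂P) / π0
        + c ^ 2 * ∫ ω, W ω * W ω ∂P := by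
  classical
  set I1 : Ω → ℝ := fun ω => if A ω = 1 then (1:ℝ) else 0 with hI1
  set I0 : Ω → ℝ := fun ω => if A ω = 0 then (1:ℝ) else 0 with hI0
  -- integrability of indicator-weighted terms
  have hI1meas : Measurable I1 :=
    (measurable_of_countable (fun b : Fin 2 => if b = 1 then (1:ℝ) else 0)).comp hA
  have hI0meas : Measurable I0 :=
    (measurable_of_countable (fun b : Fin 2 => if b = 0 then (1:ℝ) else 0)).comp hA
  have hbdd1 : ∀ ω, ‖I1 ω‖ ≤ 1 := by
    intro ω; by_cases h : A ω = 1 <;> simp [hI1, h]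
  have hbdd0 : ∀ ω, ‖I0 ω‖ ≤ 1 := by
    intro ω; by_cases h : A ω = 0 <;> simp [hI0, h]
  -- MemLp of indicator * U
  have hIU : ∀ (I : Ω → ℝ) (U : Ω → ℝ), Measurable I → (∀ ω, ‖I ω‖ ≤ 1) → MemLp U 2 P →
      MemLp (fun ω => I ω * U ω) 2 P := by
    intro I U hIm hIb hU
    refine MemLp.of_le hU (hIm.aestronglyMeasurable.mul hU.1) (ae_of_all _ fun ω => ?_)
    rw [norm_mul]
    calc ‖I ω‖ * ‖U ω‖ ≤ 1 * ‖U ω‖ := by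
          exact mul_le_mul_of_nonneg_right (hIb ω) (norm_nonneg _)
      _ = ‖U ω‖ := one_mul _
  have hI1U1 : MemLp (fun ω => I1 ω * U1 ω) 2 P := hIU _ _ hI1meas hbdd1 hU1
  have hI0U0 : MemLp (fun ω => I0 ω * U0 ω) 2 P := hIU _ _ hI0meas hbdd0 hU0
  -- the function itself
  have hG2 : MemLp (fun ω => I1 ω / π1 * U1 ω - I0 ω / π0 * U0 ω + c * W ω) 2 P := by
    have e : (fun ω => I1 ω / π1 * U1 ω - I0 ω / π0 * U0 ω + c * W ω)
        = fun ω => (1/π1) * (I1 ω * U1 ω) - (1/π0) * (I0 ω * U0 ω) + c * W ω := by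
      funext ω; ring
    rw [e]
    exact ((hI1U1.const_mul (1/π1)).sub (hI0U0.const_mul (1/π0))).add (hW.const_mul c)
  -- integrable versions
  have intU0 : Integrable U0 P := hU0.integrable one_le_two
  have intU1 : Integrable U1 P := hU1.integrable one_le_two
  have intW : Integrable W P := hW.integrable one_le_two
  have intI1U1 : Integrable (fun ω => I1 ω * U1 ω) P := hI1U1.integrable one_le_two
  have intI0U0 : Integrable (fun ω => I0 ω * U0 ω) P := hI0U0.integrable one_le_two
  -- variance as second moment
  have var_eq : ∀ {X : Ω → ℝ}, MemLp X 2 P → (∫ x, X x ∂P) = 0 →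
      variance X P = ∫ x, X x * X x ∂P := by
    intro X hX hX0
    rw [variance_of_integral_eq_zero hX.aemeasurable hX0]
    simp [pow_two]
  -- mean zero
  have hintI1U1 : ∫ ω, I1 ω * U1 ω ∂P = 0 := by
    rw [indic_integral hA hindep 1 hU1m intU1, hiU1, mul_zero]
  have hintI0U0 : ∫ ω, I0 ω * U0 ω ∂P = 0 := by
    rw [indic_integral hA hindep 0 hU0m intU0, hiU0, mul_zero]
  have i1 : Integrable (fun ω => (1/π1) * (I1 ω * U1 ω)) P := intI1U1.const_mul _
  have i0 : Integrable (fun ω => (1/π0) * (I0 ω * U0 ω)) P := intI0U0.const_mul _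
  have iW : Integrable (fun ω => c * W ω) P := intW.const_mul _
  have e : (fun ω => I1 ω / π1 * U1 ω - I0 ω / π0 * U0 ω + c * W ω)
      = fun ω => ((1/π1) * (I1 ω * U1 ω) - (1/π0) * (I0 ω * U0 ω)) + c * W ω := by
    funext ω; ring
  have isub : Integrable (fun ω => (1/π1) * (I1 ω * U1 ω) - (1/π0) * (I0 ω * U0 ω)) P :=
    i1.sub i0
  have hGmean : ∫ ω, (I1 ω / π1 * U1 ω - I0 ω / π0 * U0 ω + c * W ω) ∂P = 0 := by
    rw [e, integral_add isub iW, integral_sub i1 i0, integral_const_mul,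
      integral_const_mul, integral_const_mul, hintI1U1, hintI0U0, hiW]
    ring
  -- second moment expansion
  have hG2' : MemLp (fun ω => I1 ω / π1 * U1 ω - I0 ω / π0 * U0 ω + c * W ω) 2 P := hG2
  have hvar := var_eq hG2' hGmean
  have fin2 : ∀ i : Fin 2, i = 0 ∨ i = 1 := by decide
  have hsq : (fun ω => (I1 ω / π1 * U1 ω - I0 ω / π0 * U0 ω + c * W ω)
        * (I1 ω / π1 * U1 ω - I0 ω / π0 * U0 ω + c * W ω))
      = fun ω =>
        I1 ω * ((1/π1^2) * (U1 ω * U1 ω) + (2*c/π1) * (U1 ω * W ω))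
        + I0 ω * ((1/π0^2) * (U0 ω * U0 ω) - (2*c/π0) * (U0 ω * W ω))
        + c^2 * (W ω * W ω) := by
    funext ω
    rcases fin2 (A ω) with h | h <;> simp only [hI1, hI0, h] <;> norm_num <;> ring
  -- inner functions
  have hf1m : Measurable[mS] (fun ω => (1/π1^2) * (U1 ω * U1 ω) + (2*c/π1) * (U1 ω * W ω)) :=
    ((hU1m.mul hU1m).const_mul _).add ((hU1m.mul hWm).const_mul _)
  have hf0m : Measurable[mS] (fun ω => (1/π0^2) * (U0 ω * U0 ω) - (2*c/π0) * (U0 ω * W ω)) :=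
    ((hU0m.mul hU0m).const_mul _).sub ((hU0m.mul hWm).const_mul _)
  have hf1i : Integrable (fun ω => (1/π1^2) * (U1 ω * U1 ω) + (2*c/π1) * (U1 ω * W ω)) P :=
    ((integrable_mul_of_L2 hU1 hU1).const_mul _).add ((integrable_mul_of_L2 hU1 hW).const_mul _)
  have hf0i : Integrable (fun ω => (1/π0^2) * (U0 ω * U0 ω) - (2*c/π0) * (U0 ω * W ω)) P :=
    ((integrable_mul_of_L2 hU0 hU0).const_mul _).sub ((integrable_mul_of_L2 hU0 hW).const_mul _)
  have hIf1 : ∫ ω, I1 ω * ((1/π1^2) * (U1 ω * U1 ω) + (2*c/π1) * (U1 ω * W ω)) ∂P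
      = π1 * ((1/π1^2) * (∫ ω, U1 ω * U1 ω ∂P)) := by
    rw [indic_integral hA hindep 1 hf1m hf1i, ← hπ1,
      integral_add ((integrable_mul_of_L2 hU1 hU1).const_mul _)
        ((integrable_mul_of_L2 hU1 hW).const_mul _),
      integral_const_mul, integral_const_mul, hiU1W]
    ring
  have hIf0 : ∫ ω, I0 ω * ((1/π0^2) * (U0 ω * U0 ω) - (2*c/π0) * (U0 ω * W ω)) ∂P
      = π0 * ((1/π0^2) * (∫ ω, U0 ω * U0 ω ∂P)) := by
    rw [indic_integral hA hindep 0 hf0m hf0i, ← hπ0,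
      integral_sub ((integrable_mul_of_L2 hU0 hU0).const_mul _)
        ((integrable_mul_of_L2 hU0 hW).const_mul _),
      integral_const_mul, integral_const_mul, hiU0W]
    ring
  have hIf1int : Integrable (fun ω =>
      I1 ω * ((1/π1^2) * (U1 ω * U1 ω) + (2*c/π1) * (U1 ω * W ω))) P :=
    hf1i.bdd_mul hI1meas.aestronglyMeasurable (ae_of_all _ hbdd1)
  have hIf0int : Integrable (fun ω =>
      I0 ω * ((1/π0^2) * (U0 ω * U0 ω) - (2*c/π0) * (U0 ω * W ω))) P :=
    hf0i.bdd_mul hI0meas.aestronglyMeasurable (ae_of_all _ hbdd0)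
  have hWWint : Integrable (fun ω => c^2 * (W ω * W ω)) P :=
    (integrable_mul_of_L2 hW hW).const_mul _
  calc variance (fun ω => I1 ω / π1 * U1 ω - I0 ω / π0 * U0 ω + c * W ω) P
      = ∫ ω, (I1 ω / π1 * U1 ω - I0 ω / π0 * U0 ω + c * W ω)
          * (I1 ω / π1 * U1 ω - I0 ω / π0 * U0 ω + c * W ω) ∂P := hvar
    _ = ∫ ω, (I1 ω * ((1/π1^2) * (U1 ω * U1 ω) + (2*c/π1) * (U1 ω * W ω))
          + I0 ω * ((1/π0^2) * (U0 ω * U0 ω) - (2*c/π0) * (U0 ω * W ω))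
          + c^2 * (W ω * W ω)) ∂P := by rw [hsq]
    _ = π1 * ((1/π1^2) * (∫ ω, U1 ω * U1 ω ∂P))
        + π0 * ((1/π0^2) * (∫ ω, U0 ω * U0 ω ∂P))
        + c^2 * ∫ ω, W ω * W ω ∂P := by
          have hadd : Integrable (fun ω =>
              I1 ω * ((1/π1^2) * (U1 ω * U1 ω) + (2*c/π1) * (U1 ω * W ω))
              + I0 ω * ((1/π0^2) * (U0 ω * U0 ω) - (2*c/π0) * (U0 ω * W ω))) P :=
            hIf1int.add hIf0int
          rw [integral_add hadd hWWint, integral_add hIf1int hIf0int,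
            hIf1, hIf0, integral_const_mul]
    _ = (∫ ω, U1 ω * U1 ω ∂P) / π1 + (∫ ω, U0 ω * U0 ω ∂P) / π0
        + c ^ 2 * ∫ ω, W ω * W ω ∂P := by
          field_simp

lemma resid_facts {Ω : Type*} [mΩ : MeasurableSpace Ω] (P : Measure Ω) [IsProbabilityMeasure P]
    (Ya W : Ω → ℝ) (hY : MemLp Ya 2 P) (hW : MemLp W 2 P) (hWmean : ∫ ω, W ω ∂P = 0)
    (β : ℝ) (hβ : β * variance W P = cov P W Ya) :
    (∫ ω, (Ya ω - (∫ x, Ya x ∂P) - β * W ω) ∂P = 0) ∧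
    (∫ ω, (Ya ω - (∫ x, Ya x ∂P) - β * W ω) * W ω ∂P = 0) ∧
    (∫ ω, (Ya ω - (∫ x, Ya x ∂P) - β * W ω) * (Ya ω - (∫ x, Ya x ∂P) - β * W ω) ∂P
      = variance Ya P - β ^ 2 * variance W P) := by
  have intY : Integrable Ya P := hY.integrable one_le_two
  have intW : Integrable W P := hW.integrable one_le_two
  have hYc : MemLp (fun ω => Ya ω - ∫ x, Ya x ∂P) 2 P := hY.sub (memLp_const _)
  have intWYc : Integrable (fun ω => W ω * (Ya ω - ∫ x, Ya x ∂P)) P :=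
    integrable_mul_of_L2 hW hYc
  have intWW : Integrable (fun ω => W ω * W ω) P := integrable_mul_of_L2 hW hW
  have intYcYc : Integrable (fun ω => (Ya ω - ∫ x, Ya x ∂P) * (Ya ω - ∫ x, Ya x ∂P)) P :=
    integrable_mul_of_L2 hYc hYc
  have hWW : variance W P = ∫ ω, W ω * W ω ∂P := by
    rw [variance_of_integral_eq_zero hW.aemeasurable hWmean]
    simp [pow_two]
  have hWYc : ∫ ω, W ω * (Ya ω - ∫ x, Ya x ∂P) ∂P = cov P W Ya := by
    simp [cov, hWmean]
  have hvarY : variance Ya P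
      = ∫ ω, (Ya ω - ∫ x, Ya x ∂P) * (Ya ω - ∫ x, Ya x ∂P) ∂P := by
    rw [variance_eq_integral hY.aemeasurable]
    simp [pow_two]
  refine ⟨?_, ?_, ?_⟩
  · have isub : Integrable (fun ω => Ya ω - ∫ x, Ya x ∂P) P := intY.sub (integrable_const _)
    rw [integral_sub isub (intW.const_mul β), integral_sub intY (integrable_const _),
      integral_const_mul, hWmean, integral_const]
    simp
  · have e : (fun ω => (Ya ω - (∫ x, Ya x ∂P) - β * W ω) * W ω)
        = fun ω => W ω * (Ya ω - ∫ x, Ya x ∂P) - β * (W ω * W ω) := by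
      funext ω; ring
    rw [e, integral_sub intWYc (intWW.const_mul β), integral_const_mul, hWYc, ← hWW, hβ,
      sub_self]
  · have e : (fun ω => (Ya ω - (∫ x, Ya x ∂P) - β * W ω) * (Ya ω - (∫ x, Ya x ∂P) - β * W ω))
        = fun ω => ((Ya ω - ∫ x, Ya x ∂P) * (Ya ω - ∫ x, Ya x ∂P)
            - 2 * β * (W ω * (Ya ω - ∫ x, Ya x ∂P))) + β ^ 2 * (W ω * W ω) := by
      funext ω; ring
    have ia : Integrable (fun ω => (Ya ω - ∫ x, Ya x ∂P) * (Ya ω - ∫ x, Ya x ∂P)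
        - 2 * β * (W ω * (Ya ω - ∫ x, Ya x ∂P))) P :=
      intYcYc.sub (intWYc.const_mul _)
    rw [e, integral_add ia (intWW.const_mul _), integral_sub intYcYc (intWYc.const_mul _),
      integral_const_mul, integral_const_mul, hWYc, ← hWW, ← hvarY, ← hβ]
    ring

theorem linear_adjusted_ate_variance
    {Ω : Type*} (𝒢 : MeasurableSpace Ω) [mΩ : MeasurableSpace Ω] (P : Measure Ω) [IsProbabilityMeasure P]
    (hG : 𝒢 ≤ mΩ)
    (Y : Fin 2 → Ω → ℝ) (hYL2 : ∀ a, MemLp (Y a) 2 P)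
    (A : Ω → Fin 2) (hA : Measurable A)
    (hindep : Indep (MeasurableSpace.comap A inferInstance)
      (𝒢 ⊔ MeasurableSpace.comap (fun ω => (Y 0 ω, Y 1 ω)) inferInstance) P)
    (π : Fin 2 → ℝ) (hπ : ∀ a, π a = (P {ω | A ω = a}).toReal)
    (hπpos : ∀ a, 0 < π a) (hπlt : ∀ a, π a < 1) (hπsum : π 0 + π 1 = 1)
    (W : Ω → ℝ) (hWG : Measurable[𝒢] W) (hWL2 : MemLp W 2 P)
    (hWmean : ∫ ω, W ω ∂P = 0) (hWvar : 0 < variance W P)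
    (σ : Fin 2 → ℝ) (hσ : ∀ a, σ a = Real.sqrt (variance (Y a) P)) (hσpos : ∀ a, 0 < σ a)
    (ρ : Fin 2 → ℝ)
    (hρ : ∀ a, ρ a = @cov Ω mΩ P W (Y a) / (σ a * Real.sqrt (variance W P)))
    (m : Fin 2 → Ω → ℝ)
    (hm : ∀ a ω, m a ω = (∫ x, Y a x ∂P) + (@cov Ω mΩ P W (Y a) / variance W P) * W ω) :
    variance (fun ω =>
        (((if A ω = 1 then (1:ℝ) else 0) / π 1) * (Y (A ω) ω - m 1 ω)
            + (m 1 ω - ∫ x, Y 1 x ∂P))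
        - (((if A ω = 0 then (1:ℝ) else 0) / π 0) * (Y (A ω) ω - m 0 ω)
            + (m 0 ω - ∫ x, Y 0 x ∂P))) P
      = σ 0 ^ 2 / π 0 + σ 1 ^ 2 / π 1
        - π 0 * π 1 * (ρ 0 * σ 0 / π 0 + ρ 1 * σ 1 / π 1) ^ 2 := by
  classical
  have hA' : Measurable[mΩ] A := hA
  have fin2 : ∀ i : Fin 2, i = 0 ∨ i = 1 := by decide
  have hv0 : variance W P ≠ 0 := ne_of_gt hWvar
  have hβv : ∀ a : Fin 2, (@cov Ω mΩ P W (Y a) / variance W P) * variance W P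
      = @cov Ω mΩ P W (Y a) := fun a => div_mul_cancel₀ _ hv0
  -- the residual functions
  have hfun : (fun ω =>
        (((if A ω = 1 then (1:ℝ) else 0) / π 1) * (Y (A ω) ω - m 1 ω)
            + (m 1 ω - ∫ x, Y 1 x ∂P))
        - (((if A ω = 0 then (1:ℝ) else 0) / π 0) * (Y (A ω) ω - m 0 ω)
            + (m 0 ω - ∫ x, Y 0 x ∂P)))
      = fun ω => (if A ω = 1 then (1:ℝ) else 0) / π 1
            * (Y 1 ω - (∫ x, Y 1 x ∂P) - (@cov Ω mΩ P W (Y 1) / variance W P) * W ω)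
          - (if A ω = 0 then (1:ℝ) else 0) / π 0
            * (Y 0 ω - (∫ x, Y 0 x ∂P) - (@cov Ω mΩ P W (Y 0) / variance W P) * W ω)
          + (@cov Ω mΩ P W (Y 1) / variance W P - @cov Ω mΩ P W (Y 0) / variance W P)
            * W ω := by
    funext ω
    rcases fin2 (A ω) with h | h <;> simp only [hm, h] <;> norm_num <;> ring
  -- measurability wrt the sub-σ-algebra
  set mS := 𝒢 ⊔ MeasurableSpace.comap (fun ω => (Y 0 ω, Y 1 ω)) inferInstance with hmS
  have hpair : Measurable[MeasurableSpace.comap (fun ω => (Y 0 ω, Y 1 ω)) inferInstance]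
      (fun ω => (Y 0 ω, Y 1 ω)) := Measurable.of_comap_le le_rfl
  have hY0mS : Measurable[mS] (Y 0) := (measurable_fst.comp hpair).mono le_sup_right le_rfl
  have hY1mS : Measurable[mS] (Y 1) := (measurable_snd.comp hpair).mono le_sup_right le_rfl
  have hWmS : Measurable[mS] W := hWG.mono le_sup_left le_rfl
  have hU0m : Measurable[mS] (fun ω =>
      Y 0 ω - (∫ x, Y 0 x ∂P) - (@cov Ω mΩ P W (Y 0) / variance W P) * W ω) :=
    (hY0mS.sub measurable_const).sub (hWmS.const_mul _)
  have hU1m : Measurable[mS] (fun ω =>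
      Y 1 ω - (∫ x, Y 1 x ∂P) - (@cov Ω mΩ P W (Y 1) / variance W P) * W ω) :=
    (hY1mS.sub measurable_const).sub (hWmS.const_mul _)
  -- MemLp of residuals
  have hU0 : MemLp (fun ω =>
      Y 0 ω - (∫ x, Y 0 x ∂P) - (@cov Ω mΩ P W (Y 0) / variance W P) * W ω) 2 P :=
    ((hYL2 0).sub (memLp_const _)).sub (hWL2.const_mul _)
  have hU1 : MemLp (fun ω =>
      Y 1 ω - (∫ x, Y 1 x ∂P) - (@cov Ω mΩ P W (Y 1) / variance W P) * W ω) 2 P :=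
    ((hYL2 1).sub (memLp_const _)).sub (hWL2.const_mul _)
  -- residual moment facts
  obtain ⟨h0mean, h0W, h0sq⟩ :=
    resid_facts (mΩ := mΩ) P (Y 0) W (hYL2 0) hWL2 hWmean _ (hβv 0)
  obtain ⟨h1mean, h1W, h1sq⟩ :=
    resid_facts (mΩ := mΩ) P (Y 1) W (hYL2 1) hWL2 hWmean _ (hβv 1)
  have hWW : variance W P = ∫ ω, W ω * W ω ∂P := by
    rw [variance_of_integral_eq_zero hWL2.aemeasurable hWmean]
    simp [pow_two]
  -- apply the main computation
  have hmc := main_calc (mΩ := mΩ) P hA' hindep hU0 hU1 hWL2 hU0m hU1m hWmS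
    (π 0) (π 1)
    (@cov Ω mΩ P W (Y 1) / variance W P - @cov Ω mΩ P W (Y 0) / variance W P)
    (hπ 0) (hπ 1) (hπpos 0).ne' (hπpos 1).ne' h0mean h1mean h0W h1W hWmean
  rw [hfun, hmc, h0sq, h1sq, ← hWW]
  -- final algebra
  have hσ2 : ∀ a : Fin 2, variance (Y a) P = σ a ^ 2 := fun a => by
    rw [hσ a, Real.sq_sqrt (variance_nonneg _ _)]
  have hs0 : Real.sqrt (variance W P) ≠ 0 := (Real.sqrt_pos.mpr hWvar).ne'
  have hss : Real.sqrt (variance W P) ^ 2 = variance W P := Real.sq_sqrt hWvar.le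
  have hπ0eq : π 0 = 1 - π 1 := by linarith
  have hπ1ne : π 1 ≠ 0 := (hπpos 1).ne'
  have hπ0ne : (1:ℝ) - π 1 ≠ 0 := by have := hπpos 0; rw [hπ0eq] at this; linarith
  obtain ⟨q0, hq0⟩ : ∃ q, @cov Ω mΩ P W (Y 0) / Real.sqrt (variance W P) = q := ⟨_, rfl⟩
  obtain ⟨q1, hq1⟩ : ∃ q, @cov Ω mΩ P W (Y 1) / Real.sqrt (variance W P) = q := ⟨_, rfl⟩
  have h2 : ∀ C : ℝ, (C / variance W P) ^ 2 * variance W P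
      = (C / Real.sqrt (variance W P)) ^ 2 := by
    intro C
    rw [div_pow, div_pow, hss, pow_two (variance W P), ← div_div, div_mul_cancel₀ _ hv0]
  have h20 : (@cov Ω mΩ P W (Y 0) / variance W P) ^ 2 * variance W P = q0 ^ 2 := by
    rw [h2, hq0]
  have h21 : (@cov Ω mΩ P W (Y 1) / variance W P) ^ 2 * variance W P = q1 ^ 2 := by
    rw [h2, hq1]
  have h3 : (@cov Ω mΩ P W (Y 1) / variance W P - @cov Ω mΩ P W (Y 0) / variance W P) ^ 2
      * variance W P = (q1 - q0) ^ 2 := by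
    have e : @cov Ω mΩ P W (Y 1) / variance W P - @cov Ω mΩ P W (Y 0) / variance W P
        = (@cov Ω mΩ P W (Y 1) - @cov Ω mΩ P W (Y 0)) / variance W P := by ring
    have e' : q1 - q0
        = (@cov Ω mΩ P W (Y 1) - @cov Ω mΩ P W (Y 0)) / Real.sqrt (variance W P) := by
      rw [← hq0, ← hq1]; ring
    rw [e, h2, e']
  have hρσ0 : ρ 0 * σ 0 = q0 := by
    rw [hρ 0, ← hq0]
    field_simp
    rw [mul_div_assoc, div_self (hσpos 0).ne', mul_one]
  have hρσ1 : ρ 1 * σ 1 = q1 := by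
    rw [hρ 1, ← hq1]
    field_simp
    rw [mul_div_assoc, div_self (hσpos 1).ne', mul_one]
  rw [hσ2 0, hσ2 1, h20, h21, h3, hρσ0, hρσ1, hπ0eq]
  field_simp
  ring
end
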